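/- arXiv:2003.04523 — 4 statements merged into one kernel-verified Lean document; each statement's English description precedes it below -/
import Mathlib

section
/- Let (X, d_X, f_X) be an injective augmented metric space. Then for every x ∈ X the elder-rule staircase I_x is a staircase interval of ℝ²: it is an interval of the poset ℝ², its minimum element is (f_X(x), 0), and its projection to the first coordinate equals [f_X(x), ∞). -/
universe u

section conn

variable {X : Type u} [MetricSpace X]

/-- One step of an `ε`-chain inside `S`. -/
def chainRel (S : Set X) (ε : ℝ) (a b : X) : Prop :=
  a ∈ S ∧ b ∈ S ∧ dist a b ≤ ε

/-- `x` and `y` are `ε`-connected in `S`: there is a finite chain from `x` to `y` inside `S`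
whose consecutive points are at distance at most `ε`. -/
def epsConn (S : Set X) (ε : ℝ) (x y : X) : Prop :=
  x ∈ S ∧ y ∈ S ∧ Relation.ReflTransGen (chainRel S ε) x y

/-- The sublevel set `X_σ` of `f`. -/
def sublevel (f : X → ℝ) (σ : ℝ) : Set X := {x | f x ≤ σ}

end conn

section staircase

variable {X : Type u} [MetricSpace X] [LinearOrder X]

/-- The elder-rule staircase `I_x` of a point `x` of an augmented metric space:
all `(σ, ε)` with `ε ≥ 0` such that `x ∈ X_σ` and `x` is the least element of its
`ε`-connectedness class in `X_σ`. -/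
def staircase (f : X → ℝ) (x : X) : Set (ℝ × ℝ) :=
  {p | 0 ≤ p.2 ∧ f x ≤ p.1 ∧ ∀ y, epsConn (sublevel f p.1) p.2 x y → x ≤ y}

end staircase

/-- An interval of a poset `P`: a nonempty subset which is convex and connected by
finite zig-zags of comparable elements. -/
def IsPosetInterval {P : Type*} [Preorder P] (J : Set P) : Prop :=
  J.Nonempty ∧
  (∀ a ∈ J, ∀ b ∈ J, ∀ c, a ≤ c → c ≤ b → c ∈ J) ∧
  (∀ a ∈ J, ∀ b ∈ J,
    Relation.ReflTransGen (fun p q => (p ∈ J ∧ q ∈ J) ∧ (p ≤ q ∨ q ≤ p)) a b)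

lemma epsConn_mono' {X : Type u} [MetricSpace X] {S S' : Set X} {ε ε' : ℝ}
    (hS : S ⊆ S') (hε : ε ≤ ε') {x y : X} (h : epsConn S ε x y) : epsConn S' ε' x y := by
  obtain ⟨hx, hy, hc⟩ := h
  exact ⟨hS hx, hS hy, Relation.ReflTransGen.mono (fun a b (⟨ha, hb, hd⟩ : chainRel S ε a b) => (⟨hS ha, hS hb, hd.trans hε⟩ : chainRel S' ε' a b)) x y hc⟩

lemma epsConn_zero' {X : Type u} [MetricSpace X] {S : Set X} {x y : X}
    (h : epsConn S 0 x y) : x = y := by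
  obtain ⟨-, -, hc⟩ := h
  induction hc with
  | refl => rfl
  | tail _ hab ih => rw [ih, dist_eq_zero.mp (le_antisymm hab.2.2 dist_nonneg)]

lemma mem_staircase_zero' {X : Type u} [MetricSpace X] [LinearOrder X]
    {f : X → ℝ} {x : X} {σ : ℝ} (hσ : f x ≤ σ) : ((σ, (0:ℝ)) : ℝ × ℝ) ∈ staircase f x :=
  ⟨le_refl 0, hσ, fun y hy => (epsConn_zero' hy) ▸ le_refl x⟩

lemma staircase_down' {X : Type u} [MetricSpace X] [LinearOrder X]
    {f : X → ℝ} {x : X} {p q : ℝ × ℝ} (hp : p ∈ staircase f x)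
    (hq2 : 0 ≤ q.2) (hq1 : f x ≤ q.1) (hle : q ≤ p) : q ∈ staircase f x := by
  refine ⟨hq2, hq1, fun y hy => hp.2.2 y ?_⟩
  exact epsConn_mono' (fun z hz => le_trans hz hle.1) hle.2 hy

/-- **Elder-rule staircases are staircase intervals.**  Let `(X, d_X, f)` be an injective
augmented metric space, and `<` the (unique) compatible total order on `X`.  For every
`x ∈ X` the elder-rule staircase `I_x` is a staircase interval of `ℝ²` (with the product
order): it is an interval of the poset `ℝ²`, its minimum element is `(f x, 0)`, and its
projection to the first coordinate is the ray `[f x, ∞)`. -/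
theorem staircase_isStaircaseInterval
    (X : Type u) [Fintype X] [MetricSpace X] [LinearOrder X]
    (f : X → ℝ) (hinj : Function.Injective f)
    (hcompat : ∀ x y : X, f x < f y → x < y) (x : X) :
    IsPosetInterval (staircase f x) ∧
    (((f x, (0 : ℝ)) ∈ staircase f x ∧ ∀ p ∈ staircase f x, ((f x, (0 : ℝ)) : ℝ × ℝ) ≤ p) ∧
      Prod.fst '' staircase f x = Set.Ici (f x)) := by
  have hbase : ((f x, (0:ℝ)) : ℝ × ℝ) ∈ staircase f x := mem_staircase_zero' le_rfl
  have hmin : ∀ p ∈ staircase f x, ((f x, (0 : ℝ)) : ℝ × ℝ) ≤ p := fun p hp => ⟨hp.2.1, hp.1⟩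
  refine ⟨⟨⟨_, hbase⟩, ?_, ?_⟩, ⟨hbase, hmin⟩, ?_⟩
  · intro a ha b hb c hac hcb
    exact staircase_down' hb (le_trans ha.1 hac.2) (le_trans ha.2.1 hac.1) hcb
  · intro a ha b hb
    have ha0 : ((a.1, (0:ℝ)) : ℝ × ℝ) ∈ staircase f x := mem_staircase_zero' ha.2.1
    have hb0 : ((b.1, (0:ℝ)) : ℝ × ℝ) ∈ staircase f x := mem_staircase_zero' hb.2.1
    have s1 : Relation.ReflTransGen
        (fun p q : ℝ × ℝ => (p ∈ staircase f x ∧ q ∈ staircase f x) ∧ (p ≤ q ∨ q ≤ p))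
        a (a.1, 0) := Relation.ReflTransGen.single ⟨⟨ha, ha0⟩, Or.inr ⟨le_rfl, ha.1⟩⟩
    have s2 : Relation.ReflTransGen
        (fun p q : ℝ × ℝ => (p ∈ staircase f x ∧ q ∈ staircase f x) ∧ (p ≤ q ∨ q ≤ p))
        ((a.1, 0) : ℝ × ℝ) (b.1, 0) := by
      refine Relation.ReflTransGen.single ⟨⟨ha0, hb0⟩, ?_⟩
      rcases le_total a.1 b.1 with h | h
      · exact Or.inl ⟨h, le_rfl⟩
      · exact Or.inr ⟨h, le_rfl⟩
    have s3 : Relation.ReflTransGen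
        (fun p q : ℝ × ℝ => (p ∈ staircase f x ∧ q ∈ staircase f x) ∧ (p ≤ q ∨ q ≤ p))
        ((b.1, 0) : ℝ × ℝ) b := Relation.ReflTransGen.single ⟨⟨hb0, hb⟩, Or.inl ⟨le_rfl, hb.1⟩⟩
    exact (s1.trans s2).trans s3
  · apply Set.eq_of_subset_of_subset
    · rintro σ ⟨p, hp, rfl⟩
      exact hp.2.1
    · intro σ hσ
      exact ⟨(σ, 0), mem_staircase_zero' hσ, rfl⟩
end

section
/- Let (X, d_X, f_X) be an augmented metric space, < a total order on X compatible with f_X, M the zeroth component module of (X, d_X, f_X), and L ⊂ ℝ² a line with positive slope, regarded as a totally ordered set (a poset order-isomorphic to ℝ). Then the restriction M|_L : L → Vec_𝔽 is isomorphic to the direct sum ⊕_{x ∈ X} I^{L ∩ I_x^<}, where the summand indexed by x is the zero functor when L ∩ I_x^< is empty (and L ∩ I_x^< is an interval of L otherwise); in particular M|_L is interval decomposable and its barcode is the multiset {{L ∩ I_x^< : x ∈ X, L ∩ I_x^< ≠ ∅}}. -/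
open CategoryTheory
open scoped Classical

universe u

/-- We regard the poset `ℝ²` (with the product order) as a category. -/
instance : CategoryTheory.Category (ℝ × ℝ) := Preorder.smallCategory _

section conn

variable {X : Type u} [MetricSpace X]

lemma epsConn_refl {S : Set X} {ε : ℝ} {x : X} (hx : x ∈ S) : epsConn S ε x x :=
  ⟨hx, hx, Relation.ReflTransGen.refl⟩

lemma epsConn_symm {S : Set X} {ε : ℝ} {x y : X} (h : epsConn S ε x y) :
    epsConn S ε y x := by
  obtain ⟨hx, hy, hc⟩ := h
  refine ⟨hy, hx, ?_⟩
  have hsym : Symmetric (chainRel S ε) := by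
    rintro a b ⟨ha, hb, hd⟩
    exact ⟨hb, ha, by rwa [dist_comm]⟩
  clear hx hy
  induction hc with
  | refl => exact Relation.ReflTransGen.refl
  | tail _ hbc ih => exact Relation.ReflTransGen.head (hsym hbc) ih

lemma epsConn_trans {S : Set X} {ε : ℝ} {x y z : X}
    (h1 : epsConn S ε x y) (h2 : epsConn S ε y z) : epsConn S ε x z :=
  ⟨h1.1, h2.2.1, h1.2.2.trans h2.2.2⟩

lemma epsConn_mono {f : X → ℝ} {σ σ' ε ε' : ℝ} (hσ : σ ≤ σ') (hε : ε ≤ ε') {x y : X}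
    (h : epsConn (sublevel f σ) ε x y) : epsConn (sublevel f σ') ε' x y := by
  obtain ⟨hx, hy, hc⟩ := h
  refine ⟨le_trans hx hσ, le_trans hy hσ, Relation.ReflTransGen.mono ?_ _ _ hc⟩
  rintro a b ⟨ha, hb, hd⟩
  exact ⟨le_trans ha hσ, le_trans hb hσ, le_trans hd hε⟩

/-- The `ε`-connectedness class of `x` in the sublevel set `X_σ`. -/
def connClass (f : X → ℝ) (σ ε : ℝ) (x : X) : Set X :=
  {y | epsConn (sublevel f σ) ε x y}

/-- The set of `ε`-connectedness classes of the sublevel set `X_σ` (empty when `ε < 0`). -/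
def classes (f : X → ℝ) (σ ε : ℝ) : Set (Set X) :=
  {C | 0 ≤ ε ∧ ∃ x, f x ≤ σ ∧ C = connClass f σ ε x}

lemma connClass_eq {f : X → ℝ} {σ ε : ℝ} {x y : X}
    (h : epsConn (sublevel f σ) ε x y) : connClass f σ ε x = connClass f σ ε y := by
  ext z
  exact ⟨fun hz => epsConn_trans (epsConn_symm h) hz, fun hz => epsConn_trans h hz⟩

end conn

section staircase

variable {X : Type u} [MetricSpace X] [LinearOrder X]

lemma staircase_convex (f : X → ℝ) :
    ∀ x : X, ∀ a ∈ staircase f x, ∀ b ∈ staircase f x, ∀ c, a ≤ c → c ≤ b →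
      c ∈ staircase f x := by
  rintro x a ⟨ha0, haf, _⟩ b ⟨_, _, hb⟩ c hac hcb
  exact ⟨le_trans ha0 hac.2, le_trans haf hac.1,
    fun y hy => hb y (epsConn_mono hcb.1 hcb.2 hy)⟩

end staircase

section module

variable {X : Type u} [MetricSpace X] (𝔽 : Type u) [Field 𝔽]

/-- The structure map between the sets of `ε`-connectedness classes, for grades `p ≤ q`. -/
noncomputable def classMap (f : X → ℝ) {p q : ℝ × ℝ} (h : p ≤ q)
    (C : classes f p.1 p.2) : classes f q.1 q.2 :=
  ⟨connClass f q.1 q.2 C.2.2.choose,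
    le_trans C.2.1 h.2, C.2.2.choose, le_trans C.2.2.choose_spec.1 h.1, rfl⟩

lemma classMap_id (f : X → ℝ) (p : ℝ × ℝ) :
    classMap f (le_refl p) = (id : classes f p.1 p.2 → classes f p.1 p.2) := by
  funext C
  apply Subtype.ext
  exact (C.2.2.choose_spec.2).symm

lemma classMap_comp (f : X → ℝ) {p q r : ℝ × ℝ} (hpq : p ≤ q) (hqr : q ≤ r) :
    classMap f (le_trans hpq hqr) = classMap f hqr ∘ classMap f hpq := by
  funext C
  apply Subtype.ext
  set x := C.2.2.choose with hxdef
  set C' := classMap f hpq C with hC'def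
  set x₁ := C'.2.2.choose with hx₁def
  have hx₁spec := C'.2.2.choose_spec
  have hCq : (C' : Set X) = connClass f q.1 q.2 x := rfl
  have hcc : connClass f q.1 q.2 x = connClass f q.1 q.2 x₁ := by
    rw [← hCq]; exact hx₁spec.2
  have hmem : epsConn (sublevel f q.1) q.2 x x₁ := by
    have h1 : x₁ ∈ connClass f q.1 q.2 x₁ := epsConn_refl hx₁spec.1
    rw [← hcc] at h1
    exact h1
  exact connClass_eq (epsConn_mono hqr.1 hqr.2 hmem)

/-- The zeroth component module of an augmented metric space `(X, d_X, f)`, as a functor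
`ℝ² ⥤ Vec_𝔽`: at grade `(σ, ε)` it is the free `𝔽`-vector space on the set of
`ε`-connectedness classes of `X_σ` (the zero space when `ε < 0`), with structure maps
sending each class to the class containing it.  It is isomorphic to the zeroth persistent
homology of the Rips bifiltration of `(X, d_X, f)`. -/
noncomputable def zerothModule (f : X → ℝ) : (ℝ × ℝ) ⥤ ModuleCat.{u} 𝔽 where
  obj p := ModuleCat.of 𝔽 ((classes f p.1 p.2) →₀ 𝔽)
  map {p q} h := ModuleCat.ofHom (Finsupp.lmapDomain 𝔽 𝔽 (classMap f h.le))
  map_id p := by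
    show ModuleCat.ofHom (Finsupp.lmapDomain 𝔽 𝔽 (classMap f (le_refl p))) = _
    rw [classMap_id, Finsupp.lmapDomain_id]
    rfl
  map_comp {p q r} hpq hqr := by
    show ModuleCat.ofHom (Finsupp.lmapDomain 𝔽 𝔽 (classMap f (le_trans hpq.le hqr.le))) = _
    rw [classMap_comp f hpq.le hqr.le, Finsupp.lmapDomain_comp]
    rfl

/-- The direct sum `⊕ᵢ I^{J i}` of the interval modules supported on the (convex) subsets
`J i` of a poset `P`, as a functor `P ⥤ Vec_𝔽`.  At `p` its value is (canonically isomorphic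
to) the direct sum of one copy of `𝔽` for every `i` with `p ∈ J i`, and the structure maps
are identities on the summands supported at both endpoints, and zero otherwise. -/
noncomputable def sumIntervalModule {P : Type} [Preorder P]
    {ι : Type u} (J : ι → Set P)
    (hJ : ∀ i, ∀ a ∈ J i, ∀ b ∈ J i, ∀ c, a ≤ c → c ≤ b → c ∈ J i) :
    P ⥤ ModuleCat.{u} 𝔽 where
  obj p := ModuleCat.of 𝔽 (∀ i : ι, PLift (p ∈ J i) → 𝔽)
  map {p q} h := ModuleCat.ofHom
    { toFun := fun g i _ => if hp : p ∈ J i then g i ⟨hp⟩ else 0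
      map_add' := by
        intro g₁ g₂
        funext i hq
        show (if hp : p ∈ J i then (g₁ + g₂) i ⟨hp⟩ else 0)
            = (if hp : p ∈ J i then g₁ i ⟨hp⟩ else 0) + (if hp : p ∈ J i then g₂ i ⟨hp⟩ else 0)
        by_cases hp : p ∈ J i
        · simp only [dif_pos hp]; rfl
        · simp only [dif_neg hp]; rw [add_zero]
      map_smul' := by
        intro c g
        funext i hq
        show (if hp : p ∈ J i then (c • g) i ⟨hp⟩ else 0)
            = c • (if hp : p ∈ J i then g i ⟨hp⟩ else 0)
        by_cases hp : p ∈ J i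
        · simp only [dif_pos hp]; rfl
        · simp only [dif_neg hp]; rw [smul_zero] }
  map_id p := by
    refine ModuleCat.hom_ext (LinearMap.ext fun g => ?_)
    funext i hq
    show (if hp : p ∈ J i then g i ⟨hp⟩ else 0) = g i hq
    rw [dif_pos hq.down]
  map_comp {p q r} hpq hqr := by
    refine ModuleCat.hom_ext (LinearMap.ext fun g => ?_)
    funext i hr
    show (if hp : p ∈ J i then g i ⟨hp⟩ else 0)
        = (if hq : q ∈ J i then (if hp : p ∈ J i then g i ⟨hp⟩ else 0) else 0)
    by_cases hp : p ∈ J i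
    · have hq : q ∈ J i := hJ i p hp r hr.down q hpq.le hqr.le
      simp only [dif_pos hp, dif_pos hq]
    · by_cases hq : q ∈ J i
      · simp only [dif_neg hp, dif_pos hq]
      · simp only [dif_neg hp, dif_neg hq]

end module

section ElderAux
set_option linter.unusedSectionVars false

variable {X : Type} [Fintype X] [MetricSpace X] [LinearOrder X]

/-- Connectivity along the line parametrized by `t ↦ (t, m*t+c)`. -/
def lconn (f : X → ℝ) (m c t : ℝ) (x z : X) : Prop :=
  epsConn (sublevel f t) (m * t + c) x z

lemma lconn_mono (f : X → ℝ) {m c : ℝ} (hm : 0 < m) {t t' : ℝ} (h : t ≤ t') {x z : X}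
    (hc : lconn f m c t x z) : lconn f m c t' x z :=
  epsConn_mono h (by nlinarith) hc

/-- The finite set of critical parameters. -/
noncomputable def Sfin (f : X → ℝ) (m c : ℝ) : Finset ℝ :=
  Finset.univ.image f ∪ Finset.univ.image (fun yz : X × X => (dist yz.1 yz.2 - c) / m)

lemma round_down (f : X → ℝ) {m c : ℝ} (hm : 0 < m) {t : ℝ} {x z : X}
    (h : lconn f m c t x z) : ∃ t' ∈ Sfin f m c, t' ≤ t ∧ lconn f m c t' x z := by
  classical
  have hfx : f x ≤ t := h.1
  have hne : ((Sfin f m c).filter (· ≤ t)).Nonempty := by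
    refine ⟨f x, Finset.mem_filter.2 ⟨Finset.mem_union_left _ ?_, hfx⟩⟩
    exact Finset.mem_image.2 ⟨x, Finset.mem_univ x, rfl⟩
  set t' := ((Sfin f m c).filter (· ≤ t)).max' hne with ht'
  have ht'mem := Finset.mem_filter.1 (((Sfin f m c).filter (· ≤ t)).max'_mem hne)
  have hmem : ∀ y : X, f y ≤ t → f y ≤ t' := by
    intro y hy
    refine Finset.le_max' ((Sfin f m c).filter (· ≤ t)) (f y)
      (Finset.mem_filter.2 ⟨Finset.mem_union_left _ ?_, hy⟩)
    exact Finset.mem_image.2 ⟨y, Finset.mem_univ y, rfl⟩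
  have hdist : ∀ y y' : X, dist y y' ≤ m * t + c → dist y y' ≤ m * t' + c := by
    intro y y' hy
    have h1 : (dist y y' - c) / m ≤ t := by rw [div_le_iff₀ hm]; nlinarith
    have h2 : (dist y y' - c) / m ≤ t' := by
      refine Finset.le_max' ((Sfin f m c).filter (· ≤ t)) ((dist y y' - c) / m)
        (Finset.mem_filter.2 ⟨Finset.mem_union_right _ ?_, h1⟩)
      exact Finset.mem_image.2 ⟨(y, y'), Finset.mem_univ _, rfl⟩
    rw [div_le_iff₀ hm] at h2; nlinarith
  obtain ⟨hx, hz, hchain⟩ := h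
  refine ⟨t', ht'mem.1, ht'mem.2, hmem x hx, hmem z hz, Relation.ReflTransGen.mono ?_ _ _ hchain⟩
  rintro a b ⟨ha, hb, hab⟩
  exact ⟨hmem a ha, hmem b hb, hdist a b hab⟩

lemma exists_elder (f : X → ℝ) {m c : ℝ} (hm : 0 < m) {x : X} (hz : ∃ z, z < x) :
    ∃ z, z < x ∧ ∀ t, (∃ z', z' < x ∧ lconn f m c t x z') → lconn f m c t x z := by
  classical
  by_cases hd : ∃ z, z < x ∧ ∃ t, lconn f m c t x z
  · set D := (Sfin f m c).filter (fun s => ∃ z, z < x ∧ lconn f m c s x z) with hD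
    have hDne : D.Nonempty := by
      obtain ⟨z, hzx, t, ht⟩ := hd
      obtain ⟨t', ht'S, _, ht'c⟩ := round_down f hm ht
      exact ⟨t', Finset.mem_filter.2 ⟨ht'S, z, hzx, ht'c⟩⟩
    have ht0 := Finset.mem_filter.1 (D.min'_mem hDne)
    obtain ⟨z0, hz0x, hz0c⟩ := ht0.2
    refine ⟨z0, hz0x, fun t ht => ?_⟩
    obtain ⟨z', hz'x, hz'c⟩ := ht
    obtain ⟨t', ht'S, ht'le, ht'c⟩ := round_down f hm hz'c
    have hle : D.min' hDne ≤ t' := Finset.min'_le _ _ (Finset.mem_filter.2 ⟨ht'S, z', hz'x, ht'c⟩)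
    exact lconn_mono f hm (hle.trans ht'le) hz0c
  · obtain ⟨z, hzx⟩ := hz
    exact ⟨z, hzx, fun t ht => absurd ⟨ht.choose, ht.choose_spec.1, t, ht.choose_spec.2⟩ hd⟩

/-- The "elder" of `x`: an element below `x` which is connected to `x` at every grade
at which `x` is connected to something below it. -/
noncomputable def elder (f : X → ℝ) (m c : ℝ) (x : X) : X :=
  if h : ∃ z, z < x ∧ ∀ t, (∃ z', z' < x ∧ lconn f m c t x z') → lconn f m c t x z
  then h.choose else x

lemma elder_lt (f : X → ℝ) {m c : ℝ} (hm : 0 < m) {x : X} (hz : ∃ z, z < x) :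
    elder f m c x < x := by
  rw [elder, dif_pos (exists_elder f hm hz)]
  exact (exists_elder f hm hz).choose_spec.1

lemma elder_conn (f : X → ℝ) {m c : ℝ} (hm : 0 < m) {x : X} {t : ℝ}
    (h : ∃ z', z' < x ∧ lconn f m c t x z') : lconn f m c t x (elder f m c x) := by
  have hz : ∃ z, z < x := ⟨h.choose, h.choose_spec.1⟩
  rw [elder, dif_pos (exists_elder f hm hz)]
  exact (exists_elder f hm hz).choose_spec.2 t h

lemma f_mono (f : X → ℝ) (hcompat : ∀ x y : X, f x < f y → x < y) {y x : X} (h : y ≤ x) :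
    f y ≤ f x :=
  not_lt.1 fun hf => absurd (hcompat x y hf) (not_lt.2 h)

end ElderAux
section PsiAux
set_option linter.unusedSectionVars false
set_option maxHeartbeats 1000000

variable {X : Type} [Fintype X] [MetricSpace X] [LinearOrder X]
variable (𝔽 : Type) [Field 𝔽]

/-- The staircase basis vector of `x` at grade `(σ, ε)`. -/
noncomputable def wv (f : X → ℝ) (m c : ℝ) (hm : 0 < m)
    (hcompat : ∀ x y : X, f x < f y → x < y) (σ ε : ℝ) (hε : 0 ≤ ε) (x : X)
    (hx : f x ≤ σ) : (classes f σ ε) →₀ 𝔽 :=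
  Finsupp.single ⟨connClass f σ ε x, hε, x, hx, rfl⟩ 1 -
    if h : ∃ z, z < x then
      Finsupp.single ⟨connClass f σ ε (elder f m c x), hε, elder f m c x,
        le_trans (f_mono f hcompat (elder_lt f hm h).le) hx, rfl⟩ 1
    else 0

/-- The comparison map at a single grade. -/
noncomputable def psi (f : X → ℝ) (m c : ℝ) (hm : 0 < m)
    (hcompat : ∀ x y : X, f x < f y → x < y) (p : ℝ × ℝ) :
    (∀ x : X, PLift (p ∈ staircase f x) → 𝔽) →ₗ[𝔽] ((classes f p.1 p.2) →₀ 𝔽) where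
  toFun g := ∑ x : X, if h : p ∈ staircase f x then
      g x ⟨h⟩ • wv 𝔽 f m c hm hcompat p.1 p.2 h.1 x h.2.1 else 0
  map_add' g₁ g₂ := by
    rw [← Finset.sum_add_distrib]
    refine Finset.sum_congr rfl fun x _ => ?_
    by_cases h : p ∈ staircase f x
    · rw [dif_pos h, dif_pos h, dif_pos h]
      show (g₁ x ⟨h⟩ + g₂ x ⟨h⟩) • _ = _
      rw [add_smul]
    · rw [dif_neg h, dif_neg h, dif_neg h, add_zero]
  map_smul' a g := by
    rw [RingHom.id_apply, Finset.smul_sum]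
    refine Finset.sum_congr rfl fun x _ => ?_
    by_cases h : p ∈ staircase f x
    · rw [dif_pos h, dif_pos h]
      show (a * g x ⟨h⟩) • _ = _
      rw [mul_smul]
    · rw [dif_neg h, dif_neg h, smul_zero]

lemma psi_apply (f : X → ℝ) (m c : ℝ) (hm : 0 < m)
    (hcompat : ∀ x y : X, f x < f y → x < y) (p : ℝ × ℝ)
    (g : ∀ x : X, PLift (p ∈ staircase f x) → 𝔽) :
    psi 𝔽 f m c hm hcompat p g = ∑ x : X, if h : p ∈ staircase f x then
      g x ⟨h⟩ • wv 𝔽 f m c hm hcompat p.1 p.2 h.1 x h.2.1 else 0 := rfl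

end PsiAux
section InjAux
set_option linter.unusedSectionVars false
set_option maxHeartbeats 1000000

variable {X : Type} [Fintype X] [MetricSpace X] [LinearOrder X]
variable (𝔽 : Type) [Field 𝔽]

lemma mem_connClass_self {f : X → ℝ} {σ ε : ℝ} {x : X} (hx : f x ≤ σ) :
    x ∈ connClass f σ ε x := epsConn_refl hx

lemma stair_class_ne {f : X → ℝ} {p : ℝ × ℝ} {x x' : X}
    (h : p ∈ staircase f x) (h' : p ∈ staircase f x') (hne : x' ≠ x) :
    connClass f p.1 p.2 x' ≠ connClass f p.1 p.2 x := by
  intro heq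
  have hx' : x' ∈ connClass f p.1 p.2 x := heq ▸ mem_connClass_self h'.2.1
  exact hne (le_antisymm (h'.2.2 x (epsConn_symm hx')) (h.2.2 x' hx'))

lemma psi_g_zero (f : X → ℝ) (m c : ℝ) (hm : 0 < m)
    (hcompat : ∀ x y : X, f x < f y → x < y) (p : ℝ × ℝ)
    (g : ∀ x : X, PLift (p ∈ staircase f x) → 𝔽)
    (hg : psi 𝔽 f m c hm hcompat p g = 0) : g = 0 := by
  have hwf : WellFounded ((· > ·) : X → X → Prop) := IsWellFounded.wf
  have main : ∀ x : X, ∀ h : p ∈ staircase f x, g x ⟨h⟩ = 0 := by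
    intro x
    refine hwf.induction (C := fun x => ∀ h : p ∈ staircase f x, g x ⟨h⟩ = 0) x ?_
    intro x IH h
    set Cx : classes f p.1 p.2 := ⟨connClass f p.1 p.2 x, h.1, x, h.2.1, rfl⟩ with hCxdef
    have h0 : (psi 𝔽 f m c hm hcompat p g) Cx = 0 := by rw [hg]; rfl
    rw [psi_apply, Finset.sum_apply'] at h0
    have hsum : ∑ x' : X, (if h' : p ∈ staircase f x' then
        g x' ⟨h'⟩ • wv 𝔽 f m c hm hcompat p.1 p.2 h'.1 x' h'.2.1 else 0) Cx
        = g x ⟨h⟩ := by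
      rw [Finset.sum_eq_single_of_mem x (Finset.mem_univ x)]
      · rw [dif_pos h]
        rw [Finsupp.smul_apply, wv, Finsupp.sub_apply, Finsupp.single_eq_same]
        have he : (if hz : ∃ z, z < x then
            Finsupp.single (⟨connClass f p.1 p.2 (elder f m c x), h.1, elder f m c x,
              le_trans (f_mono f hcompat (elder_lt f hm hz).le) h.2.1, rfl⟩ :
                classes f p.1 p.2) (1 : 𝔽) else 0) Cx = 0 := by
          by_cases hz : ∃ z, z < x
          · rw [dif_pos hz]
            refine Finsupp.single_eq_of_ne' ?_
            intro heq
            have hcc : connClass f p.1 p.2 (elder f m c x) = connClass f p.1 p.2 x :=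
              congrArg Subtype.val heq
            have hmem : elder f m c x ∈ connClass f p.1 p.2 x :=
              hcc ▸ mem_connClass_self (le_trans (f_mono f hcompat (elder_lt f hm hz).le) h.2.1)
            exact absurd (h.2.2 _ hmem) (not_le.2 (elder_lt f hm hz))
          · rw [dif_neg hz]; rfl
        rw [he, sub_zero, smul_eq_mul, mul_one]
      · intro x' _ hne
        by_cases h' : p ∈ staircase f x'
        · rw [dif_pos h']
          rw [Finsupp.smul_apply, wv, Finsupp.sub_apply]
          have h1 : (Finsupp.single (⟨connClass f p.1 p.2 x', h'.1, x', h'.2.1, rfl⟩ :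
              classes f p.1 p.2) (1 : 𝔽)) Cx = 0 :=
            Finsupp.single_eq_of_ne' (fun heq =>
              stair_class_ne h h' hne (congrArg Subtype.val heq))
          rw [h1]
          by_cases hz : ∃ z, z < x'
          · rw [dif_pos hz]
            by_cases hcc : connClass f p.1 p.2 (elder f m c x') = connClass f p.1 p.2 x
            · have hmem : elder f m c x' ∈ connClass f p.1 p.2 x :=
                hcc ▸ mem_connClass_self (le_trans (f_mono f hcompat (elder_lt f hm hz).le) h'.2.1)
              have hlt : x < x' := lt_of_le_of_lt (h.2.2 _ hmem) (elder_lt f hm hz)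
              rw [IH x' hlt h', zero_smul]
            · rw [Finsupp.single_eq_of_ne' (fun heq => hcc (congrArg Subtype.val heq)),
                zero_sub, smul_neg, smul_zero, neg_zero]
          · rw [dif_neg hz]
            show g x' ⟨h'⟩ • ((0:𝔽) - (0 : (classes f p.1 p.2) →₀ 𝔽) Cx) = 0
            rw [Finsupp.coe_zero, Pi.zero_apply, sub_zero, smul_zero]
        · rw [dif_neg h']; rfl
    rw [hsum] at h0
    exact h0
  funext x hx
  exact main x hx.down

end InjAux
section SurjAux
set_option linter.unusedSectionVars false
set_option maxHeartbeats 1000000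

variable {X : Type} [Fintype X] [MetricSpace X] [LinearOrder X]
variable (𝔽 : Type) [Field 𝔽]

lemma single_mem_range (f : X → ℝ) (m c : ℝ) (hm : 0 < m)
    (hcompat : ∀ x y : X, f x < f y → x < y) (p : ℝ × ℝ) :
    ∀ x₀ : X, ∀ C : classes f p.1 p.2, x₀ ∈ C.1 → (∀ y ∈ C.1, x₀ ≤ y) →
      Finsupp.single C (1 : 𝔽) ∈ LinearMap.range (psi 𝔽 f m c hm hcompat p) := by
  have hwf : WellFounded ((· < ·) : X → X → Prop) := IsWellFounded.wf
  intro x₀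
  refine hwf.induction
    (C := fun x₀ => ∀ C : classes f p.1 p.2, x₀ ∈ C.1 → (∀ y ∈ C.1, x₀ ≤ y) →
      Finsupp.single C (1 : 𝔽) ∈ LinearMap.range (psi 𝔽 f m c hm hcompat p)) x₀ ?_
  intro x₀ IH C hmem hmin
  obtain ⟨hε, hex⟩ := C.2
  obtain ⟨xw, hxw, hCw⟩ := hex
  have hmemw : epsConn (sublevel f p.1) p.2 xw x₀ := by
    have : x₀ ∈ connClass f p.1 p.2 xw := hCw ▸ hmem
    exact this
  have hCx : C.1 = connClass f p.1 p.2 x₀ := by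
    rw [hCw]; exact connClass_eq hmemw
  have hsub : f x₀ ≤ p.1 := hmemw.2.1
  have hst : p ∈ staircase f x₀ :=
    ⟨hε, hsub, fun y hy => hmin y (by rw [hCx]; exact hy)⟩
  have hC : C = ⟨connClass f p.1 p.2 x₀, hε, x₀, hsub, rfl⟩ := Subtype.ext hCx
  set e : ∀ x : X, PLift (p ∈ staircase f x) → 𝔽 :=
    fun y _ => if y = x₀ then 1 else 0 with he
  have hψe : psi 𝔽 f m c hm hcompat p e
      = wv 𝔽 f m c hm hcompat p.1 p.2 hst.1 x₀ hst.2.1 := by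
    rw [psi_apply]
    rw [Finset.sum_eq_single_of_mem x₀ (Finset.mem_univ x₀)]
    · rw [dif_pos hst]
      show (if x₀ = x₀ then (1:𝔽) else 0) • _ = _
      rw [if_pos rfl, one_smul]
    · intro x' _ hne
      by_cases h' : p ∈ staircase f x'
      · rw [dif_pos h']
        show (if x' = x₀ then (1:𝔽) else 0) • _ = 0
        rw [if_neg hne, zero_smul]
      · rw [dif_neg h']
  by_cases hz : ∃ z, z < x₀
  · set y := elder f m c x₀ with hy
    have hylt : y < x₀ := elder_lt f hm hz
    have hfy : f y ≤ p.1 := le_trans (f_mono f hcompat hylt.le) hsub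
    set Ce : classes f p.1 p.2 := ⟨connClass f p.1 p.2 y, hε, y, hfy, rfl⟩ with hCe
    have hwv : wv 𝔽 f m c hm hcompat p.1 p.2 hst.1 x₀ hst.2.1
        = Finsupp.single C 1 - Finsupp.single Ce 1 := by
      rw [wv, dif_pos hz, hC]
    obtain ⟨x₁, hx₁mem, hx₁min⟩ := Set.exists_min_image Ce.1 id (Set.toFinite _)
      ⟨y, mem_connClass_self hfy⟩
    have hx₁lt : x₁ < x₀ := lt_of_le_of_lt (hx₁min y (mem_connClass_self hfy)) hylt
    obtain ⟨g₁, hg₁⟩ := IH x₁ hx₁lt Ce hx₁mem hx₁min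
    refine ⟨e + g₁, ?_⟩
    rw [map_add, hg₁, hψe, hwv]
    abel
  · have hwv : wv 𝔽 f m c hm hcompat p.1 p.2 hst.1 x₀ hst.2.1 = Finsupp.single C 1 := by
      rw [wv, dif_neg hz, hC, sub_zero]
    exact ⟨e, hψe.trans hwv⟩

lemma psi_bijective (f : X → ℝ) (m c : ℝ) (hm : 0 < m)
    (hcompat : ∀ x y : X, f x < f y → x < y) (p : ℝ × ℝ) :
    Function.Bijective (psi 𝔽 f m c hm hcompat p) := by
  constructor
  · intro g₁ g₂ hg
    have := psi_g_zero 𝔽 f m c hm hcompat p (g₁ - g₂)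
      (by rw [map_sub, hg, sub_self])
    exact sub_eq_zero.1 this
  · intro v
    have hv : ∀ v : (classes f p.1 p.2) →₀ 𝔽,
        v ∈ LinearMap.range (psi 𝔽 f m c hm hcompat p) := by
      intro v
      induction v using Finsupp.induction_linear with
      | zero => exact zero_mem _
      | add a b ha hb => exact add_mem ha hb
      | single C b =>
        obtain ⟨hε, xw, hxw, hCw⟩ := C.2
        have hne : C.1.Nonempty := ⟨xw, hCw ▸ mem_connClass_self hxw⟩
        obtain ⟨x₀, hx₀mem, hx₀min⟩ := Set.exists_min_image C.1 id (Set.toFinite _) hne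
        have h1 := single_mem_range 𝔽 f m c hm hcompat p x₀ C hx₀mem hx₀min
        have h2 : Finsupp.single C b = b • Finsupp.single C (1:𝔽) := by
          rw [Finsupp.smul_single, smul_eq_mul, mul_one]
        rw [h2]
        exact Submodule.smul_mem _ b h1
    exact hv v

end SurjAux
section NatAux
set_option linter.unusedSectionVars false
set_option maxHeartbeats 1000000

variable {X : Type} [Fintype X] [MetricSpace X] [LinearOrder X]
variable (𝔽 : Type) [Field 𝔽]

lemma classMap_cls (f : X → ℝ) {p q : ℝ × ℝ} (h : p ≤ q) {x : X}
    (hε : 0 ≤ p.2) (hx : f x ≤ p.1) :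
    classMap f h ⟨connClass f p.1 p.2 x, hε, x, hx, rfl⟩ =
      ⟨connClass f q.1 q.2 x, le_trans hε h.2, x, le_trans hx h.1, rfl⟩ := by
  apply Subtype.ext
  set C : classes f p.1 p.2 := ⟨connClass f p.1 p.2 x, hε, x, hx, rfl⟩ with hCdef
  show connClass f q.1 q.2 C.2.2.choose = connClass f q.1 q.2 x
  have hspec := C.2.2.choose_spec
  have hxc : epsConn (sublevel f p.1) p.2 x C.2.2.choose := by
    have h1 : C.2.2.choose ∈ connClass f p.1 p.2 C.2.2.choose :=
      mem_connClass_self hspec.1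
    rw [← hspec.2] at h1
    exact h1
  exact (connClass_eq (epsConn_mono h.1 h.2 hxc)).symm

lemma wv_map (f : X → ℝ) (m c : ℝ) (hm : 0 < m)
    (hcompat : ∀ x y : X, f x < f y → x < y) {p q : ℝ × ℝ} (h : p ≤ q) {x : X}
    (hε : 0 ≤ p.2) (hx : f x ≤ p.1) :
    Finsupp.lmapDomain 𝔽 𝔽 (classMap f h) (wv 𝔽 f m c hm hcompat p.1 p.2 hε x hx) =
      wv 𝔽 f m c hm hcompat q.1 q.2 (le_trans hε h.2) x (le_trans hx h.1) := by
  rw [wv, wv, map_sub]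
  congr 1
  · rw [Finsupp.lmapDomain_apply, Finsupp.mapDomain_single, classMap_cls f h hε hx]
  · by_cases hz : ∃ z, z < x
    · rw [dif_pos hz, dif_pos hz, Finsupp.lmapDomain_apply, Finsupp.mapDomain_single,
        classMap_cls f h hε (le_trans (f_mono f hcompat (elder_lt f hm hz).le) hx)]
    · rw [dif_neg hz, dif_neg hz, map_zero]

lemma wv_zero (f : X → ℝ) (m c : ℝ) (hm : 0 < m)
    (hcompat : ∀ x y : X, f x < f y → x < y) {q : ℝ × ℝ} (hq : q.2 = m * q.1 + c)
    {x : X} (hε : 0 ≤ q.2) (hx : f x ≤ q.1)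
    (hd : ∃ z, z < x ∧ epsConn (sublevel f q.1) q.2 x z) :
    wv 𝔽 f m c hm hcompat q.1 q.2 hε x hx = 0 := by
  have hz : ∃ z, z < x := ⟨hd.choose, hd.choose_spec.1⟩
  have hconn : lconn f m c q.1 x (elder f m c x) :=
    elder_conn f hm ⟨hd.choose, hd.choose_spec.1, by
      show epsConn (sublevel f q.1) (m * q.1 + c) x hd.choose
      rw [← hq]; exact hd.choose_spec.2⟩
  have hconn' : epsConn (sublevel f q.1) q.2 x (elder f m c x) := by
    rw [hq]; exact hconn
  have hcc : connClass f q.1 q.2 x = connClass f q.1 q.2 (elder f m c x) :=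
    connClass_eq hconn'
  rw [wv, dif_pos hz, sub_eq_zero]
  exact congrArg (fun C => Finsupp.single C (1:𝔽)) (Subtype.ext hcc)

lemma psi_nat (f : X → ℝ) (m c : ℝ) (hm : 0 < m)
    (hcompat : ∀ x y : X, f x < f y → x < y) {p q : ℝ × ℝ} (h : p ≤ q)
    (hq : q.2 = m * q.1 + c)
    (g : ∀ x : X, PLift (p ∈ staircase f x) → 𝔽) :
    Finsupp.lmapDomain 𝔽 𝔽 (classMap f h) (psi 𝔽 f m c hm hcompat p g) =
      psi 𝔽 f m c hm hcompat q
        (fun x _ => if hp : p ∈ staircase f x then g x ⟨hp⟩ else 0) := by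
  rw [psi_apply, psi_apply, map_sum]
  refine Finset.sum_congr rfl fun x _ => ?_
  by_cases hp : p ∈ staircase f x
  · rw [dif_pos hp]
    by_cases hqx : q ∈ staircase f x
    · rw [dif_pos hqx, map_smul, wv_map 𝔽 f m c hm hcompat h hp.1 hp.2.1, dif_pos hp]
    · rw [dif_neg hqx, map_smul, wv_map 𝔽 f m c hm hcompat h hp.1 hp.2.1]
      have hd : ∃ z, z < x ∧ epsConn (sublevel f q.1) q.2 x z := by
        by_contra hno
        push_neg at hno
        refine hqx ⟨le_trans hp.1 h.2, le_trans hp.2.1 h.1, fun y hy => ?_⟩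
        by_contra hxy
        exact hno y (not_le.1 hxy) hy
      rw [wv_zero 𝔽 f m c hm hcompat hq _ _ hd, smul_zero]
  · rw [dif_neg hp]
    by_cases hqx : q ∈ staircase f x
    · rw [dif_pos hqx, dif_neg hp, zero_smul, map_zero]
    · rw [dif_neg hqx, map_zero]

end NatAux
/-- **The elder-rule staircode determines the fibered barcode.**  Let `(X, d_X, f)` be an
augmented metric space, `<` a total order on `X` compatible with `f`, `M` the zeroth
component module of `(X, d_X, f)`, and `L ⊂ ℝ²` a line of positive slope, regarded as a
poset with the order inherited from `ℝ²` (so order-isomorphic to `ℝ`).  Then the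
restriction `M|_L` is isomorphic to the direct sum `⊕_{x ∈ X} I^{L ∩ I_x}`, where the
summand indexed by `x` is the zero functor when `L ∩ I_x = ∅` (and `L ∩ I_x` is an
interval of `L` otherwise).  In particular `M|_L` is interval decomposable with barcode
`{{L ∩ I_x : x ∈ X, L ∩ I_x ≠ ∅}}`. -/
theorem restriction_of_zerothModule_to_line_iso_sum_staircases
    (𝔽 : Type) [Field 𝔽] (X : Type) [Fintype X] [MetricSpace X] [LinearOrder X]
    (f : X → ℝ) (hcompat : ∀ x y : X, f x < f y → x < y)
    (m c : ℝ) (hm : 0 < m) (L : Set (ℝ × ℝ)) (hL : L = {p | p.2 = m * p.1 + c}) :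
    (∀ x : X, ({q : L | (q : ℝ × ℝ) ∈ staircase f x}).Nonempty →
      IsPosetInterval {q : L | (q : ℝ × ℝ) ∈ staircase f x}) ∧
    Nonempty ((Subtype.mono_coe (· ∈ L)).functor ⋙ zerothModule 𝔽 f ≅
      sumIntervalModule 𝔽 (fun x : X => {q : L | (q : ℝ × ℝ) ∈ staircase f x})
        (fun x a ha b hb q h1 h2 => staircase_convex f x ↑a ha ↑b hb ↑q h1 h2)) := by
  have htot : ∀ a b : L, a ≤ b ∨ b ≤ a := by
    intro a b
    have ha : (a : ℝ × ℝ).2 = m * (a : ℝ × ℝ).1 + c :=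
      (Set.ext_iff.1 hL (a : ℝ × ℝ)).1 a.2
    have hb : (b : ℝ × ℝ).2 = m * (b : ℝ × ℝ).1 + c :=
      (Set.ext_iff.1 hL (b : ℝ × ℝ)).1 b.2
    rcases le_total (a : ℝ × ℝ).1 (b : ℝ × ℝ).1 with hab | hab
    · exact Or.inl (Subtype.coe_le_coe.1 (Prod.le_def.2 ⟨hab, by rw [ha, hb]; nlinarith⟩))
    · exact Or.inr (Subtype.coe_le_coe.1 (Prod.le_def.2 ⟨hab, by rw [ha, hb]; nlinarith⟩))
  constructor
  · intro x hne
    refine ⟨hne, ?_, ?_⟩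
    · rintro a ha b hb q h1 h2
      exact staircase_convex f x ↑a ha ↑b hb ↑q h1 h2
    · intro a ha b hb
      exact Relation.ReflTransGen.single ⟨⟨ha, hb⟩, htot a b⟩
  · have hiso : sumIntervalModule 𝔽 (fun x : X => {q : L | (q : ℝ × ℝ) ∈ staircase f x})
        (fun x a ha b hb q h1 h2 => staircase_convex f x ↑a ha ↑b hb ↑q h1 h2) ≅
        (Subtype.mono_coe (· ∈ L)).functor ⋙ zerothModule 𝔽 f := by
      refine NatIso.ofComponents
        (fun q => LinearEquiv.toModuleIso
          (LinearEquiv.ofBijective (psi 𝔽 f m c hm hcompat (q : ℝ × ℝ))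
            (psi_bijective 𝔽 f m c hm hcompat (q : ℝ × ℝ)))) ?_
      intro q q' hqq
      refine ModuleCat.hom_ext (LinearMap.ext fun g => ?_)
      have hle : (q : ℝ × ℝ) ≤ (q' : ℝ × ℝ) := Subtype.coe_le_coe.2 (leOfHom hqq)
      have hq' : (q' : ℝ × ℝ).2 = m * (q' : ℝ × ℝ).1 + c :=
        (Set.ext_iff.1 hL (q' : ℝ × ℝ)).1 q'.2
      exact (psi_nat 𝔽 f m c hm hcompat hle hq' g).symm
    exact ⟨hiso.symm⟩
end

section
/- Let θ be a treegram over a nonempty finite set X, and let <₁ and <₂ be two total orders on X, each compatible with the birth times. Then the multisets of half-open intervals {{[b(x), d^{<₁}(x)) : x ∈ X}} and {{[b(x), d^{<₂}(x)) : x ∈ X}} are equal; i.e., the elder-rule barcode of θ does not depend on the choice of compatible total order. -/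
universe u

section treegram

variable {X : Type u}

/-- A treegram over a finite set `X`: a monotone family of sub-partitions of `X`
(collections of nonempty pairwise disjoint subsets of `X`, ordered by refinement),
which is eventually the single-block partition `{X}`, eventually empty in the other
direction, and locally constant to the right. -/
structure Treegram (X : Type u) where
  /-- the sub-partition at time `t` -/
  blocks : ℝ → Set (Set X)
  nonempty_of_mem : ∀ t : ℝ, ∀ B ∈ blocks t, B.Nonempty
  disjoint' : ∀ t : ℝ, ∀ B ∈ blocks t, ∀ C ∈ blocks t, B ≠ C → B ∩ C = ∅
  refines : ∀ ⦃s t : ℝ⦄, s ≤ t → ∀ B ∈ blocks s, ∃ C ∈ blocks t, B ⊆ C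
  eventually_whole : ∃ T > (0 : ℝ),
    (∀ t, T ≤ t → blocks t = {Set.univ}) ∧ (∀ t, t ≤ -T → blocks t = ∅)
  right_constant : ∀ t : ℝ, ∃ δ > (0 : ℝ), ∀ s, t ≤ s → s ≤ t + δ → blocks s = blocks t

/-- The birth time of `x`: the minimal `t` such that `x` lies in some block of the
sub-partition at time `t`. -/
noncomputable def birth (T : Treegram X) (x : X) : ℝ :=
  sInf {t : ℝ | ∃ B ∈ T.blocks t, x ∈ B}

lemma Treegram.eq_of_subset (T : Treegram X) {t : ℝ} {B C : Set X}
    (hB : B ∈ T.blocks t) (hC : C ∈ T.blocks t) (hsub : B ⊆ C) : B = C := by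
  by_contra hne
  have hdisj := T.disjoint' t B hB C hC hne
  obtain ⟨b, hb⟩ := T.nonempty_of_mem t B hB
  have hmem : b ∈ B ∩ C := ⟨hb, hsub hb⟩
  rw [hdisj] at hmem
  exact hmem

end treegram

/-- The death time of `x` (an extended real) with respect to a total order `le` on `X`:
the supremum of the times `t ≥ b(x)` at which `x` is the `le`-least element of the block
containing it. -/
noncomputable def death {X : Type u} (T : Treegram X) (le : X → X → Prop) (x : X) : EReal :=
  sSup {e : EReal | ∃ t : ℝ, e = (t : EReal) ∧ birth T x ≤ t ∧
    ∀ B ∈ T.blocks t, x ∈ B → ∀ y ∈ B, le x y}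

/-! ### Auxiliary lemmas -/

lemma Multiset.countP_split {α : Type*} (p q : α → Prop) [DecidablePred p] [DecidablePred q]
    [DecidablePred fun a => p a ∧ ¬ q a] (s : Multiset α)
    (hpq : ∀ a ∈ s, q a → p a) :
    s.countP p = s.countP q + s.countP (fun a => p a ∧ ¬ q a) := by
  induction s using Multiset.induction_on with
  | empty => simp
  | cons a s ih =>
    have hqs : ∀ b ∈ s, q b → p b := fun b hb => hpq b (Multiset.mem_cons_of_mem hb)
    have ha : q a → p a := hpq a (Multiset.mem_cons_self a s)
    simp only [Multiset.countP_cons, ih hqs]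
    by_cases hq : q a
    · by_cases hp : p a
      · simp [hp, hq]; omega
      · exact absurd (ha hq) hp
    · by_cases hp : p a
      · simp [hp, hq]; omega
      · simp [hp, hq]

open Classical in
/-- Two multisets of extended reals with the same cardinality and the same counts
strictly above every real threshold are equal.  -/
lemma multiset_ereal_eq (M₁ M₂ : Multiset EReal)
    (hcard : Multiset.card M₁ = Multiset.card M₂)
    (h : ∀ t : ℝ, M₁.countP (fun e => (t : EReal) < e)
        = M₂.countP (fun e => (t : EReal) < e)) : M₁ = M₂ := by
  classical
  set S : Finset EReal := (M₁ + M₂).toFinset with hS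
  set R : Finset ℝ := S.image EReal.toReal with hR
  have hmemS : ∀ e, (e ∈ M₁ ∨ e ∈ M₂) → e ∈ S := by
    intro e he
    simp only [hS, Multiset.mem_toFinset, Multiset.mem_add]
    exact he
  refine Multiset.ext.2 fun e => ?_
  induction e using EReal.rec with
  | bot =>
    obtain ⟨t, ht⟩ : ∃ t : ℝ, ∀ r ∈ R, t < r := by
      obtain ⟨t₀, ht₀⟩ := Finset.exists_le (R.image (fun r => -r))
      refine ⟨-t₀ - 1, fun r hr => ?_⟩
      have := ht₀ (-r) (Finset.mem_image_of_mem _ hr)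
      linarith
    have key : ∀ M : Multiset EReal, (∀ e ∈ M, e ∈ S) →
        M.countP (fun e => (t : EReal) < e) = M.countP (fun e => e ≠ ⊥) := by
      intro M hM
      refine Multiset.countP_congr rfl fun e he => ?_
      induction e using EReal.rec with
      | bot => simp
      | top => simp
      | coe r =>
        have hrR : r ∈ R := Finset.mem_image.2 ⟨(r : EReal), hM _ he, by simp⟩
        simp [EReal.coe_lt_coe_iff, ht r hrR]
    have key1 := key M₁ (fun e he => hmemS e (Or.inl he))
    have key2 := key M₂ (fun e he => hmemS e (Or.inr he))
    have d1 : ∀ M : Multiset EReal,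
        Multiset.card M = M.countP (fun e => e ≠ ⊥) + M.count ⊥ := by
      intro M
      rw [Multiset.card_eq_countP_add_countP (fun e => e ≠ ⊥), Multiset.count]
      congr 1
      exact Multiset.countP_congr rfl fun e _ => by by_cases hb : e = ⊥ <;> simp [hb, eq_comm]
    have := h t
    have e1 := d1 M₁
    have e2 := d1 M₂
    omega
  | top =>
    obtain ⟨t, ht⟩ := Finset.exists_le R
    have key : ∀ M : Multiset EReal, (∀ e ∈ M, e ∈ S) →
        M.countP (fun e => (t : EReal) < e) = M.count ⊤ := by
      intro M hM
      rw [Multiset.count]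
      refine Multiset.countP_congr rfl fun e he => ?_
      induction e using EReal.rec with
      | bot => simp
      | top => simp
      | coe r =>
        have hrR : r ∈ R := Finset.mem_image.2 ⟨(r : EReal), hM _ he, by simp⟩
        have : ¬ ((t : EReal) < (r : EReal)) := by
          simp [EReal.coe_lt_coe_iff, not_lt, ht r hrR]
        simp [this]
    rw [← key M₁ (fun e he => hmemS e (Or.inl he)),
      ← key M₂ (fun e he => hmemS e (Or.inr he))]
    exact h t
  | coe r =>
    obtain ⟨t, htr, ht⟩ : ∃ t : ℝ, t < r ∧ ∀ s ∈ R, s < r → s ≤ t := by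
      refine ⟨(insert (r - 1) (R.filter (· < r))).max' (Finset.insert_nonempty _ _),
        ?_, ?_⟩
      · rw [Finset.max'_lt_iff]
        intro y hy
        rcases Finset.mem_insert.1 hy with h' | h'
        · rw [h']; linarith
        · exact (Finset.mem_filter.1 h').2
      · intro s hs hsr
        have hmem : s ∈ insert (r - 1) (R.filter (· < r)) :=
          Finset.mem_insert_of_mem (Finset.mem_filter.2 ⟨hs, hsr⟩)
        exact Finset.le_max' _ s hmem
    have key : ∀ M : Multiset EReal, (∀ e ∈ M, e ∈ S) →
        M.countP (fun e => (t : EReal) < e ∧ ¬ ((r : EReal) < e)) = M.count (r : EReal) := by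
      intro M hM
      rw [Multiset.count]
      refine Multiset.countP_congr rfl fun e he => ?_
      induction e using EReal.rec with
      | bot => simp
      | top => simp
      | coe s =>
        have hrR : s ∈ R := Finset.mem_image.2 ⟨(s : EReal), hM _ he, by simp⟩
        simp only [EReal.coe_lt_coe_iff, not_lt, EReal.coe_eq_coe_iff, eq_iff_iff]
        constructor
        · rintro ⟨h1, h2⟩
          rcases lt_or_eq_of_le h2 with h3 | h3
          · exact absurd (ht s hrR h3) (not_le.2 h1)
          · exact h3.symm
        · rintro rfl; exact ⟨htr, le_refl r⟩
    have split : ∀ M : Multiset EReal,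
        M.countP (fun e => (t : EReal) < e)
          = M.countP (fun e => (r : EReal) < e)
            + M.countP (fun e => (t : EReal) < e ∧ ¬ ((r : EReal) < e)) := by
      intro M
      refine Multiset.countP_split _ _ _ fun e _ hre => ?_
      exact lt_trans (EReal.coe_lt_coe_iff.2 htr) hre
    have s1 := split M₁
    have s2 := split M₂
    have k1 := key M₁ (fun e he => hmemS e (Or.inl he))
    have k2 := key M₂ (fun e he => hmemS e (Or.inr he))
    have ha := h t
    have hb := h r
    omega

namespace ElderAux

variable {X : Type u} (T : Treegram X)

lemma block_unique {t : ℝ} {B C : Set X} (hB : B ∈ T.blocks t) (hC : C ∈ T.blocks t)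
    {x : X} (hxB : x ∈ B) (hxC : x ∈ C) : B = C := by
  by_contra hne
  have hd := T.disjoint' t B hB C hC hne
  have hx : x ∈ B ∩ C := ⟨hxB, hxC⟩
  rw [hd] at hx
  exact hx

/-- The set of times at which `x` belongs to some block. -/
def birthSet (x : X) : Set ℝ := {t : ℝ | ∃ B ∈ T.blocks t, x ∈ B}

lemma birthSet_nonempty (x : X) : (birthSet T x).Nonempty := by
  obtain ⟨T₀, _, hw, _⟩ := T.eventually_whole
  refine ⟨T₀, Set.univ, ?_, Set.mem_univ x⟩
  rw [hw T₀ le_rfl]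
  rfl

lemma birthSet_bddBelow (x : X) : BddBelow (birthSet T x) := by
  obtain ⟨T₀, _, _, he⟩ := T.eventually_whole
  refine ⟨-T₀, fun t ht => ?_⟩
  obtain ⟨B, hB, _⟩ := ht
  by_contra hlt
  rw [he t (le_of_lt (not_le.1 hlt))] at hB
  exact hB

lemma birthSet_up {x : X} {s t : ℝ} (h : s ∈ birthSet T x) (hst : s ≤ t) :
    t ∈ birthSet T x := by
  obtain ⟨B, hB, hxB⟩ := h
  obtain ⟨C, hC, hBC⟩ := T.refines hst B hB
  exact ⟨C, hC, hBC hxB⟩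

lemma birth_mem (x : X) : ∃ B ∈ T.blocks (birth T x), x ∈ B := by
  obtain ⟨δ, hδ, hconst⟩ := T.right_constant (birth T x)
  obtain ⟨a, ha, halt⟩ := Real.lt_sInf_add_pos (birthSet_nonempty T x) hδ
  have hba : birth T x ≤ a := csInf_le (birthSet_bddBelow T x) ha
  obtain ⟨B, hB, hxB⟩ := ha
  rw [hconst a hba (le_of_lt halt)] at hB
  exact ⟨B, hB, hxB⟩

lemma mem_of_birth_le {x : X} {t : ℝ} (h : birth T x ≤ t) : ∃ B ∈ T.blocks t, x ∈ B :=
  birthSet_up T (birth_mem T x) h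

/-- `x` is the `o`-least element of its block at time `t`. -/
def Lst (o : LinearOrder X) (x : X) (t : ℝ) : Prop :=
  ∃ B ∈ T.blocks t, x ∈ B ∧ ∀ y ∈ B, o.le x y

lemma lst_mono {o : LinearOrder X} {x : X} {s t : ℝ} (hb : birth T x ≤ s) (hst : s ≤ t)
    (h : Lst T o x t) : Lst T o x s := by
  obtain ⟨Bt, hBt, hxBt, hleast⟩ := h
  obtain ⟨Bs, hBs, hxBs⟩ := mem_of_birth_le T hb
  obtain ⟨C, hC, hBC⟩ := T.refines hst Bs hBs
  have hCB : C = Bt := block_unique T hC hBt (hBC hxBs) hxBt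
  exact ⟨Bs, hBs, hxBs, fun y hy => hleast y (hCB ▸ hBC hy)⟩

lemma lt_death_iff (o : LinearOrder X) (x : X) (t : ℝ) :
    ((t : EReal) < death T o.le x) ↔ Lst T o x (max (birth T x) t) := by
  constructor
  · intro hlt
    obtain ⟨e, he, hte⟩ := lt_sSup_iff.1 hlt
    obtain ⟨s, rfl, hbs, hP⟩ := he
    have hts : t < s := EReal.coe_lt_coe_iff.1 hte
    have hlsts : Lst T o x s := by
      obtain ⟨B, hB, hxB⟩ := mem_of_birth_le T hbs
      exact ⟨B, hB, hxB, hP B hB hxB⟩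
    exact lst_mono T (le_max_left _ _) (max_le hbs (le_of_lt hts)) hlsts
  · intro hlst
    set m := max (birth T x) t with hm
    obtain ⟨δ, hδ, hconst⟩ := T.right_constant m
    have hblocks : T.blocks (m + δ) = T.blocks m := hconst (m + δ) (by linarith) le_rfl
    obtain ⟨B, hB, hxB, hleast⟩ := hlst
    have hmem : ((m + δ : ℝ) : EReal) ∈ {e : EReal | ∃ s : ℝ, e = (s : EReal) ∧
        birth T x ≤ s ∧ ∀ B ∈ T.blocks s, x ∈ B → ∀ y ∈ B, o.le x y} := by
      refine ⟨m + δ, rfl, le_trans (le_max_left _ _) (by linarith), ?_⟩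
      intro C hC hxC
      rw [hblocks] at hC
      have : C = B := block_unique T hC hB hxC hxB
      exact this ▸ hleast
    calc (t : EReal) < ((m + δ : ℝ) : EReal) := by
          apply EReal.coe_lt_coe_iff.2
          have : t ≤ m := le_max_right _ _
          linarith
      _ ≤ death T o.le x := le_sSup hmem

lemma exists_least (o : LinearOrder X) [Fintype X] {B : Set X} (hne : B.Nonempty) :
    ∃ z ∈ B, ∀ y ∈ B, o.le z y := by
  letI := o
  obtain ⟨z, hz, h⟩ := Set.exists_min_image B id (Set.toFinite B) hne
  exact ⟨z, hz, h⟩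

lemma least_birth_eq {o₁ o₂ : LinearOrder X}
    (h₁ : ∀ x y : X, birth T x < birth T y → o₁.lt x y)
    (h₂ : ∀ x y : X, birth T x < birth T y → o₂.lt x y)
    {B : Set X} {x y : X} (hx : x ∈ B) (hy : y ∈ B)
    (hlx : ∀ z ∈ B, o₁.le x z) (hly : ∀ z ∈ B, o₂.le y z) :
    birth T x = birth T y := by
  have hxy : ¬ birth T y < birth T x := fun hlt =>
    ((o₁.lt_iff_le_not_ge y x).1 (h₁ y x hlt)).2 (hlx y hy)
  have hyx : ¬ birth T x < birth T y := fun hlt =>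
    ((o₂.lt_iff_le_not_ge x y).1 (h₂ x y hlt)).2 (hly x hx)
  linarith [not_lt.1 hxy, not_lt.1 hyx]

lemma least_unique {o : LinearOrder X} {B : Set X} {x y : X}
    (hx : x ∈ B) (hy : y ∈ B) (hlx : ∀ z ∈ B, o.le x z) (hly : ∀ z ∈ B, o.le y z) :
    x = y :=
  o.le_antisymm x y (hlx y hy) (hly x hx)

open Classical in
/-- The `o`-least element of the block containing `x` at time `t` (or `x` if none). -/
noncomputable def pick [Fintype X] (o : LinearOrder X) (t : ℝ) (x : X) : X :=
  if h : ∃ z, ∃ B ∈ T.blocks t, x ∈ B ∧ z ∈ B ∧ ∀ y ∈ B, o.le z y then h.choose else x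

lemma pick_spec [Fintype X] (o : LinearOrder X) {t : ℝ} {x : X} {B : Set X}
    (hB : B ∈ T.blocks t) (hx : x ∈ B) :
    pick T o t x ∈ B ∧ ∀ y ∈ B, o.le (pick T o t x) y := by
  have hex : ∃ z, ∃ B' ∈ T.blocks t, x ∈ B' ∧ z ∈ B' ∧ ∀ y ∈ B', o.le z y := by
    obtain ⟨z, hz, hle⟩ := exists_least o ⟨x, hx⟩
    exact ⟨z, B, hB, hx, hz, hle⟩
  rw [pick, dif_pos hex]
  obtain ⟨B', hB', hxB', hzB', hle⟩ := hex.choose_spec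
  have hBB : B' = B := block_unique T hB' hB hxB' hx
  subst hBB
  exact ⟨hzB', hle⟩

open Classical in
lemma card_lst [Fintype X] (o₁ o₂ : LinearOrder X)
    (h₁ : ∀ x y : X, birth T x < birth T y → o₁.lt x y)
    (h₂ : ∀ x y : X, birth T x < birth T y → o₂.lt x y)
    (b t : ℝ) :
    (Finset.univ.filter (fun x => birth T x = b ∧ Lst T o₁ x t)).card
      = (Finset.univ.filter (fun x => birth T x = b ∧ Lst T o₂ x t)).card := by
  refine Finset.card_nbij (pick T o₂ t) ?_ ?_ ?_
  · intro x hx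
    rw [Finset.mem_coe, Finset.mem_filter] at hx ⊢
    obtain ⟨-, hbx, B, hB, hxB, hle₁⟩ := hx
    obtain ⟨hpB, hple₂⟩ := pick_spec T o₂ hB hxB
    refine ⟨Finset.mem_univ _, ?_, B, hB, hpB, hple₂⟩
    rw [← hbx]
    exact (least_birth_eq T h₁ h₂ hxB hpB hle₁ hple₂).symm
  · intro x hx x' hx' heq
    simp only [Finset.coe_filter, Set.mem_setOf_eq] at hx hx'
    obtain ⟨-, hbx, B, hB, hxB, hle₁⟩ := hx
    obtain ⟨-, hbx', B', hB', hxB', hle₁'⟩ := hx'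
    obtain ⟨hpB, _⟩ := pick_spec T o₂ hB hxB
    obtain ⟨hpB', _⟩ := pick_spec T o₂ hB' hxB'
    rw [heq] at hpB
    have hBB : B = B' := block_unique T hB hB' hpB hpB'
    subst hBB
    exact least_unique hxB hxB' hle₁ hle₁'
  · intro y hy
    simp only [Finset.coe_filter, Set.mem_setOf_eq] at hy
    obtain ⟨-, hby, B, hB, hyB, hle₂⟩ := hy
    obtain ⟨hxB, hxle₁⟩ := pick_spec T o₁ hB hyB
    set x := pick T o₁ t y with hxdef
    refine ⟨x, ?_, ?_⟩
    · simp only [Finset.coe_filter, Set.mem_setOf_eq]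
      refine ⟨Finset.mem_univ _, ?_, B, hB, hxB, hxle₁⟩
      rw [← hby]
      exact least_birth_eq T h₁ h₂ hxB hyB hxle₁ hle₂
    · obtain ⟨hpB, hple₂⟩ := pick_spec T o₂ hB hxB
      exact least_unique hpB hyB hple₂ hle₂

open Classical in
lemma fiber_death_eq [Fintype X] (o₁ o₂ : LinearOrder X)
    (h₁ : ∀ x y : X, birth T x < birth T y → o₁.lt x y)
    (h₂ : ∀ x y : X, birth T x < birth T y → o₂.lt x y) (b : ℝ) :
    Multiset.map (death T o₁.le) (Finset.univ.filter (fun x => birth T x = b)).val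
      = Multiset.map (death T o₂.le) (Finset.univ.filter (fun x => birth T x = b)).val := by
  apply multiset_ereal_eq
  · simp
  · intro t
    rw [Multiset.countP_map, Multiset.countP_map]
    have hcnt : ∀ o : LinearOrder X,
        Multiset.card ((Finset.univ.filter (fun x => birth T x = b)).val.filter
            (fun x => (t : EReal) < death T o.le x))
          = (Finset.univ.filter (fun x => birth T x = b ∧ Lst T o x (max b t))).card := by
      intro o
      rw [← Finset.filter_val, Finset.filter_filter]
      show (Finset.univ.filter (fun x => birth T x = b ∧ (t : EReal) < death T o.le x)).card = _
      congr 1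
      apply Finset.filter_congr
      intro x _
      constructor
      · rintro ⟨hb, hd⟩
        refine ⟨hb, ?_⟩
        have := (lt_death_iff T o x t).1 hd
        rwa [hb] at this
      · rintro ⟨hb, hl⟩
        refine ⟨hb, ?_⟩
        apply (lt_death_iff T o x t).2
        rwa [hb]
    rw [hcnt o₁, hcnt o₂]
    exact card_lst T o₁ o₂ h₁ h₂ b (max b t)

end ElderAux

/-- **The elder-rule barcode of a treegram is well defined.**  Let `θ` be a treegram over
a nonempty finite set `X`, and let `<₁`, `<₂` be two total orders on `X`, each compatible
with the birth times.  Then the multisets of half-open intervals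
`{{[b(x), d^{<₁}(x)) : x ∈ X}}` and `{{[b(x), d^{<₂}(x)) : x ∈ X}}` are equal: the
elder-rule barcode of `θ` does not depend on the choice of compatible total order. -/
theorem elder_rule_barcode_well_defined
    (X : Type u) [Fintype X] [Nonempty X] (T : Treegram X)
    (o₁ o₂ : LinearOrder X)
    (h₁ : ∀ x y : X, birth T x < birth T y → o₁.lt x y)
    (h₂ : ∀ x y : X, birth T x < birth T y → o₂.lt x y) :
    Multiset.map
        (fun x : X => {t : ℝ | birth T x ≤ t ∧ (t : EReal) < death T o₁.le x})
        Finset.univ.val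
      = Multiset.map
        (fun x : X => {t : ℝ | birth T x ≤ t ∧ (t : EReal) < death T o₂.le x})
        Finset.univ.val := by
  classical
  have key2 : Multiset.map (fun x : X => (birth T x, death T o₁.le x)) Finset.univ.val
      = Multiset.map (fun x : X => (birth T x, death T o₂.le x)) Finset.univ.val := by
    refine Multiset.ext.2 fun p => ?_
    rw [Multiset.count_map, Multiset.count_map]
    have hcnt : ∀ o : LinearOrder X,
        Multiset.card (Finset.univ.val.filter
            (fun x : X => p = (birth T x, death T o.le x)))
          = Multiset.count p.2 (Multiset.map (death T o.le)
              (Finset.univ.filter (fun x => birth T x = p.1)).val) := by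
      intro o
      rw [Multiset.count_map, ← Finset.filter_val, ← Finset.filter_val, Finset.filter_filter]
      congr 1
      apply Finset.val_inj.2
      apply Finset.filter_congr
      intro x _
      rw [Prod.ext_iff]
      constructor
      · rintro ⟨ha, hb⟩
        exact ⟨ha.symm, hb⟩
      · rintro ⟨ha, hb⟩
        exact ⟨ha.symm, hb⟩
    rw [hcnt o₁, hcnt o₂, ElderAux.fiber_death_eq T o₁ o₂ h₁ h₂ p.1]
  have hfact : ∀ o : LinearOrder X,
      (fun x : X => {t : ℝ | birth T x ≤ t ∧ (t : EReal) < death T o.le x})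
        = (fun p : ℝ × EReal => {t : ℝ | p.1 ≤ t ∧ (t : EReal) < p.2})
            ∘ (fun x : X => (birth T x, death T o.le x)) := fun o => rfl
  rw [hfact o₁, hfact o₂, ← Multiset.map_map, ← Multiset.map_map, key2]
end

section
/- Let E be a finite-dimensional real inner product space and P ⊂ E a finite set in which all pairwise distances between distinct points are distinct. Let T be a minimum spanning tree of the complete graph on P with edge weights w({p, q}) := dist(p, q). If {x, a} and {x, b} are two distinct edges of T (so a ≠ b), then the angle ∠ a x b at x satisfies ∠ a x b ≥ π/3. -/
open scoped BigOperators

/-- The weight of an unordered pair of points of a metric space: the distance between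
its two endpoints. -/
noncomputable def pairDist (V : Type*) [PseudoMetricSpace V] : Sym2 V → ℝ :=
  Sym2.lift ⟨fun p q => dist p q, fun p q => dist_comm p q⟩

lemma pairDist_mk {V : Type*} [PseudoMetricSpace V] (u v : V) :
    pairDist V s(u, v) = dist u v := rfl

open SimpleGraph in
/-- Key asymmetric lemma: if the angle is `< π/3` and `x–b` is the shorter of the two
edges, we get a contradiction by exchanging the edge `{x, a}` for `{a, b}`. -/
lemma mst_key
    {E : Type*} [NormedAddCommGroup E] [InnerProductSpace ℝ E]
    (P : Finset E)
    (T : SimpleGraph ↥P) (hTconn : T.Connected) (hTacyc : T.IsAcyclic)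
    (hmin : ∀ T' : SimpleGraph ↥P, T'.Connected → T'.IsAcyclic →
      (∑ᶠ e ∈ T.edgeSet, pairDist ↥P e) ≤ ∑ᶠ e ∈ T'.edgeSet, pairDist ↥P e)
    (x a b : ↥P) (hxa : T.Adj x a) (hxb : T.Adj x b) (hab : a ≠ b)
    (hle : dist (b : E) (x : E) ≤ dist (a : E) (x : E))
    (hθ : EuclideanGeometry.angle (a : E) (x : E) (b : E) < Real.pi / 3) : False := by
  classical
  have hxa' : x ≠ a := hxa.ne
  have hxb' : x ≠ b := hxb.ne
  -- distinctness of the relevant unordered pairs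
  have h1 : s(x, b) ≠ s(x, a) := by
    intro hq
    rw [Sym2.eq_iff] at hq
    rcases hq with ⟨h, h'⟩ | ⟨h, h'⟩ <;> simp_all
  have h2 : s(x, a) ≠ s(a, b) := by
    intro hq
    rw [Sym2.eq_iff] at hq
    rcases hq with ⟨h, h'⟩ | ⟨h, h'⟩ <;> simp_all
  have h3 : s(x, b) ≠ s(a, b) := by
    intro hq
    rw [Sym2.eq_iff] at hq
    rcases hq with ⟨h, h'⟩ | ⟨h, h'⟩ <;> simp_all
  set G : SimpleGraph ↥P := T \ SimpleGraph.fromEdgeSet {s(x, a)} with hG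
  set T' : SimpleGraph ↥P := G ⊔ SimpleGraph.edge a b with hT'
  have hGadj : ∀ u v : ↥P, G.Adj u v ↔ T.Adj u v ∧ s(u, v) ≠ s(x, a) := by
    intro u v
    simp only [hG, sdiff_adj, fromEdgeSet_adj, Set.mem_singleton_iff]
    constructor
    · rintro ⟨h, h'⟩
      exact ⟨h, fun he => h' ⟨he, h.ne⟩⟩
    · rintro ⟨h, h'⟩
      exact ⟨h, fun he => h' he.1⟩
  have hGxb : G.Adj x b := (hGadj x b).mpr ⟨hxb, h1⟩
  -- `a` and `b` are not adjacent in `T`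
  have hnotab : ¬ T.Adj a b := by
    intro h
    have hbr := (SimpleGraph.isAcyclic_iff_forall_adj_isBridge.mp hTacyc) h
    rw [SimpleGraph.isBridge_iff] at hbr
    apply hbr
    have ha1 : (T \ SimpleGraph.fromEdgeSet {s(a, b)}).Adj a x := by
      rw [sdiff_adj, fromEdgeSet_adj]
      exact ⟨hxa.symm, fun hc => h2 (by simpa [Sym2.eq_swap] using hc.1)⟩
    have ha2 : (T \ SimpleGraph.fromEdgeSet {s(a, b)}).Adj x b := by
      rw [sdiff_adj, fromEdgeSet_adj]
      exact ⟨hxb, fun hc => h3 hc.1⟩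
    exact ha1.reachable.trans ha2.reachable
  -- removing the edge `{x, a}` disconnects `x` from `a`
  have hbridge : ¬ G.Reachable x a := by
    have hbr := (SimpleGraph.isAcyclic_iff_forall_adj_isBridge.mp hTacyc) hxa
    rw [SimpleGraph.isBridge_iff] at hbr
    exact hbr
  have hnreach : ¬ G.Reachable a b := fun h =>
    hbridge (hGxb.reachable.trans h.symm)
  -- T' is connected
  have hT'ab : T'.Adj a b := by
    rw [hT', sup_adj, SimpleGraph.edge_adj]
    exact Or.inr ⟨Or.inl ⟨rfl, rfl⟩, hab⟩
  have hT'xb : T'.Adj x b := by rw [hT', sup_adj]; exact Or.inl hGxb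
  have hT'xa : T'.Reachable x a := hT'xb.reachable.trans hT'ab.reachable.symm
  have hpre : ∀ u v : ↥P, T.Adj u v → T'.Reachable u v := by
    intro u v huv
    by_cases he : s(u, v) = s(x, a)
    · rw [Sym2.eq_iff] at he
      rcases he with ⟨rfl, rfl⟩ | ⟨rfl, rfl⟩
      · exact hT'xa
      · exact hT'xa.symm
    · exact (SimpleGraph.Adj.reachable (by rw [hT', sup_adj]; exact Or.inl ((hGadj u v).mpr ⟨huv, he⟩)))
  have hT'pre : T'.Preconnected := by
    intro u v
    obtain ⟨w⟩ := hTconn.preconnected u v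
    induction w with
    | nil => exact SimpleGraph.Reachable.refl _
    | cons h p ih => exact (hpre _ _ h).trans ih
  have hT'conn : T'.Connected := by
    have : Nonempty ↥P := hTconn.nonempty
    exact SimpleGraph.Connected.mk hT'pre
  -- T' is acyclic
  have hT'le : T' \ SimpleGraph.fromEdgeSet {s(a, b)} ≤ G := by
    intro u v huv
    rw [sdiff_adj, fromEdgeSet_adj] at huv
    obtain ⟨h4, h5⟩ := huv
    rw [hT', sup_adj] at h4
    rcases h4 with h4 | h4
    · exact h4
    · rw [SimpleGraph.edge_adj] at h4
      exfalso
      apply h5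
      refine ⟨?_, h4.2⟩
      rcases h4.1 with ⟨rfl, rfl⟩ | ⟨rfl, rfl⟩
      · rfl
      · exact Sym2.eq_swap
  have hT'acyc : T'.IsAcyclic := by
    intro v c hc
    by_cases hf : s(a, b) ∈ c.edges
    · have hbr : T'.IsBridge s(a, b) := by
        rw [SimpleGraph.isBridge_iff]
        exact fun hr => hnreach (hr.mono hT'le)
      exact (SimpleGraph.isBridge_iff_adj_and_forall_cycle_notMem hT'ab |>.mp hbr) c hc hf
    · have hsub : ∀ e ∈ c.edges, e ∈ T.edgeSet := by
        intro e he
        have hmem := c.edges_subset_edgeSet he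
        rw [hT', SimpleGraph.edgeSet_sup] at hmem
        rcases hmem with hmem | hmem
        · rw [hG, SimpleGraph.edgeSet_sdiff] at hmem
          exact hmem.1
        · rw [SimpleGraph.edge_edgeSet_of_ne hab] at hmem
          rw [Set.mem_singleton_iff] at hmem
          exact absurd (hmem ▸ he) hf
      exact hTacyc (c.transfer T hsub) (hc.transfer hsub)
  -- edge set of T'
  have hT'edge : T'.edgeSet = insert s(a, b) (T.edgeSet \ {s(x, a)}) := by
    rw [hT', SimpleGraph.edgeSet_sup, SimpleGraph.edge_edgeSet_of_ne hab, hG,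
      SimpleGraph.edgeSet_sdiff, SimpleGraph.edgeSet_fromEdgeSet]
    ext e
    simp only [Set.mem_union, Set.mem_diff, Set.mem_singleton_iff, Set.insert_eq,
      Set.mem_setOf_eq]
    constructor
    · rintro (⟨he, hne⟩ | he)
      · exact Or.inr ⟨he, fun hc => hne ⟨hc, by simp [hc, hxa']⟩⟩
      · exact Or.inl he
    · rintro (he | ⟨he, hne⟩)
      · exact Or.inr he
      · exact Or.inl ⟨he, fun hc => hne hc.1⟩
  -- weights
  have hTfin : T.edgeSet.Finite := Set.toFinite _
  have hT'fin : T'.edgeSet.Finite := Set.toFinite _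
  have he₀mem : s(x, a) ∈ hTfin.toFinset := by
    rw [Set.Finite.mem_toFinset]; exact hxa
  have hfnot : s(a, b) ∉ hTfin.toFinset := by
    rw [Set.Finite.mem_toFinset]; exact hnotab
  have hTsum : (∑ᶠ e ∈ T.edgeSet, pairDist ↥P e) = ∑ e ∈ hTfin.toFinset, pairDist ↥P e := by
    have h := finsum_mem_coe_finset (f := pairDist ↥P) hTfin.toFinset
    rw [Set.Finite.coe_toFinset] at h
    exact h
  have hT'finset : hT'fin.toFinset = insert s(a, b) (hTfin.toFinset.erase s(x, a)) := by
    ext e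
    simp only [Set.Finite.mem_toFinset, hT'edge, Set.mem_insert_iff, Set.mem_diff,
      Set.mem_singleton_iff, Finset.mem_insert, Finset.mem_erase, Set.Finite.mem_toFinset]
    tauto
  have hT'sum : (∑ᶠ e ∈ T'.edgeSet, pairDist ↥P e)
      = pairDist ↥P s(a, b) + ((∑ e ∈ hTfin.toFinset, pairDist ↥P e) - pairDist ↥P s(x, a)) := by
    have h := finsum_mem_coe_finset (f := pairDist ↥P) hT'fin.toFinset
    rw [Set.Finite.coe_toFinset] at h
    rw [h, hT'finset,
      Finset.sum_insert (fun hmem => hfnot (Finset.mem_of_mem_erase hmem)),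
      Finset.sum_erase_eq_sub he₀mem]
  have hM := hmin T' hT'conn hT'acyc
  rw [hTsum, hT'sum] at hM
  have hkey : dist (x : ↥P) a ≤ dist (a : ↥P) b := by
    rw [← pairDist_mk, ← pairDist_mk]
    linarith
  rw [Subtype.dist_eq, Subtype.dist_eq] at hkey
  -- geometry: the law of cosines gives dist a b < dist a x
  have hcos : Real.cos (Real.pi / 3) < Real.cos (EuclideanGeometry.angle (a : E) (x : E) (b : E)) :=
    Real.cos_lt_cos_of_nonneg_of_le_pi (EuclideanGeometry.angle_nonneg _ _ _)
      (by linarith [Real.pi_pos]) hθ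
  rw [Real.cos_pi_div_three] at hcos
  have hlaw := EuclideanGeometry.law_cos (a : E) (x : E) (b : E)
  have hax : (0 : ℝ) < dist (a : E) (x : E) := by
    rw [dist_pos]
    exact fun h => hxa' (Subtype.coe_injective h.symm)
  have hbx : (0 : ℝ) < dist (b : E) (x : E) := by
    rw [dist_pos]
    exact fun h => hxb' (Subtype.coe_injective h.symm)
  have hsq : dist (a : E) (b : E) ^ 2 < dist (a : E) (x : E) ^ 2 := by
    nlinarith [mul_pos hax hbx, mul_nonneg hbx.le (sub_nonneg.mpr hle)]
  have hlt : dist (a : E) (b : E) < dist (a : E) (x : E) :=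
    lt_of_pow_lt_pow_left₀ 2 dist_nonneg hsq
  rw [dist_comm (x : E) (a : E)] at hkey
  linarith

/-- **Edges of a Euclidean minimum spanning tree meet at angles at least `π/3`.**  Let `E`
be a finite-dimensional real inner product space and `P ⊂ E` a finite set in which all
pairwise distances between distinct points are distinct.  Let `T` be a minimum spanning
tree of the complete graph on `P`, with edge weights the distances.  If `{x, a}` and
`{x, b}` are two distinct edges of `T`, then the angle `∠ a x b` at `x` is at least
`π / 3`. -/
theorem mst_angle_ge_pi_div_three
    {E : Type*} [NormedAddCommGroup E] [InnerProductSpace ℝ E] [FiniteDimensional ℝ E]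
    (P : Finset E)
    (hdist : ∀ p q p' q' : ↥P, p ≠ q → p' ≠ q' →
      dist (p : E) (q : E) = dist (p' : E) (q' : E) →
      ({(p : E), (q : E)} : Set E) = {(p' : E), (q' : E)})
    (T : SimpleGraph ↥P) (hTconn : T.Connected) (hTacyc : T.IsAcyclic)
    (hmin : ∀ T' : SimpleGraph ↥P, T'.Connected → T'.IsAcyclic →
      (∑ᶠ e ∈ T.edgeSet, pairDist ↥P e) ≤ ∑ᶠ e ∈ T'.edgeSet, pairDist ↥P e)
    (x a b : ↥P) (hxa : T.Adj x a) (hxb : T.Adj x b) (hab : a ≠ b) :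
    Real.pi / 3 ≤ EuclideanGeometry.angle (a : E) (x : E) (b : E) := by
  by_contra h
  push_neg at h
  rcases le_total (dist (b : E) (x : E)) (dist (a : E) (x : E)) with hle | hle
  · exact mst_key P T hTconn hTacyc hmin x a b hxa hxb hab hle h
  · exact mst_key P T hTconn hTacyc hmin x b a hxb hxa hab.symm hle
      (by rwa [EuclideanGeometry.angle_comm])
end
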